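/- A formal power series g = Σ_{α∈F_n^+} c_α Z_α is a free holomorphic function on the noncommutative domain D_f (i.e., Σ_k ‖Σ_{|α|=k} c_α r^{|α|} W_α‖ < ∞ for all 0 ≤ r < 1) if and only if limsup_{k→∞} (Σ_{|β|=k} |c_β|²/b_β)^{1/(2k)} ≤ 1. -/

import Mathlib

open Filter Topology
open scoped ComplexConjugate ENNReal

namespace NCDomain

/-- Words in the free monoid `F_n^+` on `n` generators. -/
abbrev Word (n : ℕ) := FreeMonoid (Fin n)

instance {n : ℕ} : DecidableEq (Word n) :=
  inferInstanceAs (DecidableEq (List (Fin n)))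

/-- The length `|α|` of a word. -/
def wordLen {n : ℕ} (α : Word n) : ℕ := FreeMonoid.length α

/-- The coefficients `b_α`, defined by `b_{g_0} = 1` and, for `|α| ≥ 1`,
`b_α = Σ_{j=1}^{|α|} Σ_{γ_1⋯γ_j = α, |γ_i| ≥ 1} a_{γ_1}⋯a_{γ_j}`, the sum running over
all ordered factorizations of `α` into nonempty words. -/
noncomputable def bCoeff {n : ℕ} (a : Word n → ℝ) (α : Word n) : ℝ :=
  if α = 1 then 1
  else ∑' L : {L : List (Word n) // L.prod = α ∧ ∀ w ∈ L, w ≠ 1}, (L.1.map a).prod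

/-- `f = Σ_{|α|≥1} a_α X_α` is a positive regular free holomorphic function:
`a_{g_0} = 0`, `a_α ≥ 0`, `a_{g_i} > 0`, and
`limsup_{k→∞} (Σ_{|α|=k} |a_α|²)^{1/(2k)} < ∞`. -/
def PosRegular {n : ℕ} (a : Word n → ℝ) : Prop :=
  a 1 = 0 ∧ (∀ α, 0 ≤ a α) ∧ (∀ i : Fin n, 0 < a (FreeMonoid.of i)) ∧
    ∃ C : ℝ, ∀ᶠ k in atTop,
      (∑' α : {β : Word n // wordLen β = k}, (a α.1) ^ 2) ≤ C ^ (2 * k)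

/-- For a tuple `T` of operators and a word `α = g_{i_1}⋯g_{i_k}`,
the product `T_α = T_{i_1}⋯T_{i_k}` (and `T_{g_0} = I`). -/
noncomputable def opWord {n : ℕ} {H : Type*} [NormedAddCommGroup H] [NormedSpace ℂ H]
    (T : Fin n → H →L[ℂ] H) (α : Word n) : H →L[ℂ] H :=
  ((FreeMonoid.toList α).map T).prod

/-- The full Fock space `F²(H_n)`, realized as `ℓ²` over the free monoid. -/
abbrev Fock (n : ℕ) : Type := lp (fun _ : Word n => ℂ) 2

/-- The canonical orthonormal basis vector `e_α` of the Fock space. -/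
noncomputable def fockBasis {n : ℕ} (α : Word n) : Fock n := lp.single 2 α (1 : ℂ)

/-- `W` is the tuple of weighted left creation operators associated with `f = Σ a_α X_α`:
`W_i e_α = √(b_α / b_{g_i α}) e_{g_i α}`. -/
def IsWeightedShift {n : ℕ} (a : Word n → ℝ) (W : Fin n → Fock n →L[ℂ] Fock n) : Prop :=
  ∀ (i : Fin n) (α : Word n),
    W i (fockBasis α) =
      (Real.sqrt (bCoeff a α / bCoeff a (FreeMonoid.of i * α)) : ℂ) •
        fockBasis (FreeMonoid.of i * α)

section Aux

variable {n : ℕ}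

lemma wordLen_toList (α : Word n) : (FreeMonoid.toList α).length = wordLen α := rfl

lemma wordLen_mul (α β : Word n) : wordLen (α * β) = wordLen α + wordLen β :=
  FreeMonoid.length_mul α β

lemma wordLen_eq_zero {α : Word n} : wordLen α = 0 ↔ α = 1 := FreeMonoid.length_eq_zero

lemma prod_wordLen (L : List (Word n)) : wordLen L.prod = (L.map wordLen).sum := by
  induction L with
  | nil => simp [wordLen]
  | cons h t ih => simp [wordLen_mul, ih]

lemma of_ne_one (i : Fin n) : FreeMonoid.of i ≠ 1 := by
  intro h
  have := congrArg FreeMonoid.length h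
  simp [FreeMonoid.length_of] at this

lemma prod_map_of (l : List (Fin n)) : (l.map FreeMonoid.of).prod = FreeMonoid.ofList l := by
  induction l with
  | nil => rfl
  | cons h t ih => simp [FreeMonoid.ofList_cons, ih]

lemma finite_words_le (m : ℕ) : Finite {w : Word n // wordLen w ≤ m} := by
  have h : Finite {l : List (Fin n) // l.length ≤ m} :=
    (List.finite_length_le (Fin n) m).to_subtype
  exact Finite.of_injective
    (fun w => (⟨FreeMonoid.toList w.1, w.2⟩ : {l : List (Fin n) // l.length ≤ m}))
    (fun x y h => Subtype.ext (FreeMonoid.toList.injective (by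
      simpa using congrArg Subtype.val h)))

lemma finite_words_eq (k : ℕ) : Finite {w : Word n // wordLen w = k} := by
  have h : Finite {l : List (Fin n) // l.length = k} :=
    (List.finite_length_eq (Fin n) k).to_subtype
  exact Finite.of_injective
    (fun w => (⟨FreeMonoid.toList w.1, w.2⟩ : {l : List (Fin n) // l.length = k}))
    (fun x y h => Subtype.ext (FreeMonoid.toList.injective (by
      simpa using congrArg Subtype.val h)))

lemma fac_finite (α : Word n) :
    Finite {L : List (Word n) // L.prod = α ∧ ∀ w ∈ L, w ≠ 1} := by
  set m := wordLen α with hm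
  haveI : Finite {w : Word n // wordLen w ≤ m} := finite_words_le m
  have hmem : ∀ (L : List (Word n)), L.prod = α → ∀ w ∈ L, wordLen w ≤ m := by
    intro L hL w hw
    have : wordLen w ∈ L.map wordLen := List.mem_map_of_mem hw
    have := List.single_le_sum (l := L.map wordLen) (fun x _ => Nat.zero_le x) _ this
    rw [← prod_wordLen, hL] at this
    exact this
  have hlen : ∀ (L : List (Word n)), L.prod = α → (∀ w ∈ L, w ≠ 1) → L.length ≤ m := by
    intro L hL hne
    have h1 : ∀ i ∈ L.map wordLen, 1 ≤ i := by
      intro i hi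
      rcases List.mem_map.mp hi with ⟨w, hw, rfl⟩
      have : wordLen w ≠ 0 := fun h => hne w hw (wordLen_eq_zero.mp h)
      omega
    have := List.length_le_sum_of_one_le _ h1
    rw [← prod_wordLen, hL] at this
    simpa using this
  haveI : Finite {l : List {w : Word n // wordLen w ≤ m} // l.length ≤ m} :=
    (List.finite_length_le _ m).to_subtype
  refine Finite.of_injective
    (fun L => (⟨L.1.pmap (fun w hw => (⟨w, hw⟩ : {w : Word n // wordLen w ≤ m}))
        (hmem L.1 L.2.1), by
          simpa [List.length_pmap] using hlen L.1 L.2.1 L.2.2⟩ :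
      {l : List {w : Word n // wordLen w ≤ m} // l.length ≤ m})) ?_
  intro x y h
  have h' := congrArg (fun l => l.1.map Subtype.val) h
  simp only [List.map_pmap] at h'
  apply Subtype.ext
  have hx : (x.1.pmap (fun w hw => Subtype.val (⟨w, hw⟩ : {w : Word n // wordLen w ≤ m}))
      (hmem x.1 x.2.1)) = x.1 := by
    simp [List.pmap_eq_map]
  have hy : (y.1.pmap (fun w hw => Subtype.val (⟨w, hw⟩ : {w : Word n // wordLen w ≤ m}))
      (hmem y.1 y.2.1)) = y.1 := by
    simp [List.pmap_eq_map]
  rw [hx, hy] at h'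
  exact h'

lemma bCoeff_one (a : Word n → ℝ) : bCoeff a 1 = 1 := if_pos rfl

lemma prod_eq_one_nil {L : List (Word n)} (hne : ∀ w ∈ L, w ≠ 1) (h : L.prod = 1) :
    L = [] := by
  cases L with
  | nil => rfl
  | cons h' t =>
    exfalso
    have hl : wordLen (List.prod (h' :: t)) = 0 := by rw [h]; exact wordLen_eq_zero.mpr rfl
    rw [prod_wordLen] at hl
    simp only [List.map_cons, List.sum_cons] at hl
    have : wordLen h' = 0 := by omega
    exact hne h' (by simp) (wordLen_eq_zero.mp this)

lemma append_factor_eq : ∀ (L1 L1' L2 L2' : List (Word n)),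
    L1.prod = L1'.prod → (∀ w ∈ L1, w ≠ 1) → (∀ w ∈ L1', w ≠ 1) →
    L1 ++ L2 = L1' ++ L2' → L1 = L1' := by
  intro L1
  induction L1 with
  | nil =>
    intro L1' L2 L2' hp h1 h1' _
    exact (prod_eq_one_nil h1' (by simpa using hp.symm)).symm
  | cons h t ih =>
    intro L1' L2 L2' hp h1 h1' happ
    cases L1' with
    | nil =>
      exfalso
      have := prod_eq_one_nil h1 (by simpa using hp)
      simp at this
    | cons h' t' =>
      simp only [List.cons_append, List.cons.injEq] at happ
      obtain ⟨rfl, happ2⟩ := happ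
      have hp' : t.prod = t'.prod := by
        simp only [List.prod_cons] at hp
        have := congrArg FreeMonoid.toList hp
        simp only [FreeMonoid.toList_mul] at this
        exact FreeMonoid.toList.injective (List.append_cancel_left this)
      have := ih t' L2 L2' hp' (fun w hw => h1 w (by simp [hw]))
        (fun w hw => h1' w (by simp [hw])) happ2
      rw [this]

lemma bCoeff_pos {a : Word n → ℝ} (ha : PosRegular a) (α : Word n) : 0 < bCoeff a α := by
  by_cases h1 : α = 1
  · simp [bCoeff, h1]
  · rw [bCoeff, if_neg h1]
    haveI := fac_finite α
    set L0 : List (Word n) := (FreeMonoid.toList α).map FreeMonoid.of with hL0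
    have hL0prod : L0.prod = α := by
      rw [hL0, prod_map_of, FreeMonoid.ofList_toList]
    have hL0mem : ∀ w ∈ L0, w ≠ 1 := by
      intro w hw
      rcases List.mem_map.mp hw with ⟨i, _, rfl⟩
      exact of_ne_one i
    have hpos : 0 < (L0.map a).prod := by
      apply List.prod_pos
      intro x hx
      rcases List.mem_map.mp hx with ⟨w, hw, rfl⟩
      rcases List.mem_map.mp hw with ⟨i, _, rfl⟩
      exact ha.2.2.1 i
    refine lt_of_lt_of_le hpos ?_
    exact Summable.le_tsum (f := fun L : {L : List (Word n) // L.prod = α ∧ ∀ w ∈ L, w ≠ 1} =>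
        (L.1.map a).prod) (Summable.of_finite) ⟨L0, hL0prod, hL0mem⟩
      (fun j _ => List.prod_nonneg (by
        intro x hx
        rcases List.mem_map.mp hx with ⟨w, _, rfl⟩
        exact ha.2.1 w))

lemma bCoeff_mul_le {a : Word n → ℝ} (ha : PosRegular a) (β γ : Word n) :
    bCoeff a β * bCoeff a γ ≤ bCoeff a (β * γ) := by
  by_cases hβ : β = 1
  · simp [hβ, bCoeff_one]
  by_cases hγ : γ = 1
  · simp [hγ, bCoeff_one]
  have hβγ : β * γ ≠ 1 := by
    intro h
    have := wordLen_eq_zero.mpr h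
    rw [wordLen_mul] at this
    exact hβ (wordLen_eq_zero.mp (by omega))
  rw [bCoeff, if_neg hβ, bCoeff, if_neg hγ, bCoeff, if_neg hβγ]
  haveI := fac_finite (n := n) β
  haveI := fac_finite (n := n) γ
  haveI := fac_finite (β * γ)
  letI : Fintype {L : List (Word n) // L.prod = β ∧ ∀ w ∈ L, w ≠ 1} := Fintype.ofFinite _
  letI : Fintype {L : List (Word n) // L.prod = γ ∧ ∀ w ∈ L, w ≠ 1} := Fintype.ofFinite _
  letI : Fintype {L : List (Word n) // L.prod = β * γ ∧ ∀ w ∈ L, w ≠ 1} := Fintype.ofFinite _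
  rw [tsum_fintype, tsum_fintype, tsum_fintype]
  set e : {L : List (Word n) // L.prod = β ∧ ∀ w ∈ L, w ≠ 1} ×
      {L : List (Word n) // L.prod = γ ∧ ∀ w ∈ L, w ≠ 1} →
      {L : List (Word n) // L.prod = β * γ ∧ ∀ w ∈ L, w ≠ 1} :=
    fun p => ⟨p.1.1 ++ p.2.1, by rw [List.prod_append, p.1.2.1, p.2.2.1], by
      intro w hw
      rcases List.mem_append.mp hw with h | h
      · exact p.1.2.2 w h
      · exact p.2.2.2 w h⟩ with he
  have hinj : Function.Injective e := by
    intro p q hpq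
    have h1 : p.1.1 ++ p.2.1 = q.1.1 ++ q.2.1 := congrArg Subtype.val hpq
    have h2 : p.1.1 = q.1.1 :=
      append_factor_eq _ _ _ _ (by rw [p.1.2.1, q.1.2.1]) p.1.2.2 q.1.2.2 h1
    have h3 : p.2.1 = q.2.1 := by
      rw [h2] at h1
      exact List.append_cancel_left h1
    exact Prod.ext (Subtype.ext h2) (Subtype.ext h3)
  have hnn : ∀ M : {L : List (Word n) // L.prod = β * γ ∧ ∀ w ∈ L, w ≠ 1},
      0 ≤ (M.1.map a).prod := by
    intro M
    apply List.prod_nonneg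
    intro x hx
    rcases List.mem_map.mp hx with ⟨w, _, rfl⟩
    exact ha.2.1 w
  calc (∑ L1 : {L : List (Word n) // L.prod = β ∧ ∀ w ∈ L, w ≠ 1}, (L1.1.map a).prod) *
        ∑ L2 : {L : List (Word n) // L.prod = γ ∧ ∀ w ∈ L, w ≠ 1}, (L2.1.map a).prod
      = ∑ p : {L : List (Word n) // L.prod = β ∧ ∀ w ∈ L, w ≠ 1} ×
          {L : List (Word n) // L.prod = γ ∧ ∀ w ∈ L, w ≠ 1},
          ((e p).1.map a).prod := by
        rw [Fintype.sum_prod_type (f := fun p : {L : List (Word n) // L.prod = β ∧ ∀ w ∈ L, w ≠ 1} ×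
          {L : List (Word n) // L.prod = γ ∧ ∀ w ∈ L, w ≠ 1} => ((e p).1.map a).prod)]
        rw [Finset.sum_mul_sum]
        apply Finset.sum_congr rfl
        intro p _
        apply Finset.sum_congr rfl
        intro q _
        simp [he, List.prod_append]
    _ = ∑ q ∈ Finset.univ.image e, (q.1.map a).prod := by
        rw [Finset.sum_image (fun x _ y _ h => hinj h)]
    _ ≤ ∑ q : {L : List (Word n) // L.prod = β * γ ∧ ∀ w ∈ L, w ≠ 1}, (q.1.map a).prod := by
        apply Finset.sum_le_sum_of_subset_of_nonneg (Finset.subset_univ _)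
        intro q _ _
        exact hnn q
/-! take/drop on words -/

def wtake (k : ℕ) (δ : Word n) : Word n := FreeMonoid.ofList ((FreeMonoid.toList δ).take k)
def wdrop (k : ℕ) (δ : Word n) : Word n := FreeMonoid.ofList ((FreeMonoid.toList δ).drop k)

lemma wtake_mul_wdrop (k : ℕ) (δ : Word n) : wtake k δ * wdrop k δ = δ := by
  apply FreeMonoid.toList.injective
  simp [wtake, wdrop, FreeMonoid.toList_mul]

lemma wtake_prod {β : Word n} {k : ℕ} (h : wordLen β = k) (γ : Word n) :
    wtake k (β * γ) = β := by
  apply FreeMonoid.toList.injective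
  simp only [wtake, FreeMonoid.toList_mul, FreeMonoid.toList_ofList]
  rw [List.take_left' (by rw [wordLen_toList]; exact h)]

lemma wdrop_prod {β : Word n} {k : ℕ} (h : wordLen β = k) (γ : Word n) :
    wdrop k (β * γ) = γ := by
  apply FreeMonoid.toList.injective
  simp only [wdrop, FreeMonoid.toList_mul, FreeMonoid.toList_ofList]
  rw [List.drop_left' (by rw [wordLen_toList]; exact h)]

lemma wordLen_wtake {k : ℕ} {δ : Word n} (h : k ≤ wordLen δ) : wordLen (wtake k δ) = k := by
  rw [← wordLen_toList]
  simp only [wtake, FreeMonoid.toList_ofList, List.length_take]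
  rw [wordLen_toList]
  omega

lemma wordLen_wdrop (k : ℕ) (δ : Word n) : wordLen (wdrop k δ) = wordLen δ - k := by
  rw [← wordLen_toList]
  simp only [wdrop, FreeMonoid.toList_ofList, List.length_drop]
  rw [wordLen_toList]

lemma wtake_eq_self {k : ℕ} {δ : Word n} (h : wordLen δ ≤ k) : wtake k δ = δ := by
  apply FreeMonoid.toList.injective
  simp only [wtake, FreeMonoid.toList_ofList]
  exact List.take_of_length_le (by rw [wordLen_toList]; exact h)

lemma wdrop_eq_one {k : ℕ} {δ : Word n} (h : wordLen δ ≤ k) : wdrop k δ = 1 := by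
  apply FreeMonoid.toList.injective
  simp only [wdrop, FreeMonoid.toList_ofList]
  simpa using List.drop_eq_nil_of_le (by rw [wordLen_toList]; exact h)

/-! basic Fock facts -/

lemma fockBasis_apply (μ δ : Word n) :
    (fockBasis μ : Fock n) δ = if δ = μ then 1 else 0 := by
  by_cases h : δ = μ
  · subst h; simp [fockBasis, lp.single_apply_self]
  · simp [fockBasis, lp.single_apply_ne 2 μ _ h, h]

noncomputable def coordCLM (δ : Word n) : Fock n →L[ℂ] ℂ :=
  LinearMap.mkContinuous
    { toFun := fun x => x δ
      map_add' := fun f g => by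
        have := lp.coeFn_add f g
        exact congrFun this δ
      map_smul' := fun m f => by
        have := lp.coeFn_smul m f
        simpa using congrFun this δ }
    1 (fun x => by
      rw [one_mul]; exact lp.norm_apply_le_norm (by norm_num : (2 : ℝ≥0∞) ≠ 0) x δ)

@[simp] lemma coordCLM_apply (δ : Word n) (x : Fock n) : coordCLM δ x = x δ := rfl

lemma single_eq_smul_basis (γ : Word n) (z : ℂ) :
    lp.single 2 γ z = z • fockBasis γ := by
  have := lp.single_smul (𝕜 := ℂ) (E := fun _ : Word n => ℂ) 2 γ z (1 : ℂ)
  rw [fockBasis, ← this, smul_eq_mul, mul_one]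

/-! action of opWord on basis vectors -/

section shift
variable {a : Word n → ℝ} {W : Fin n → Fock n →L[ℂ] Fock n}

lemma opWord_basis (ha : PosRegular a) (hW : IsWeightedShift a W) (β γ : Word n) :
    opWord W β (fockBasis γ) =
      ((Real.sqrt (bCoeff a γ / bCoeff a (β * γ)) : ℝ) : ℂ) • fockBasis (β * γ) := by
  have main : ∀ (l : List (Fin n)) (γ : Word n),
      opWord W (FreeMonoid.ofList l) (fockBasis γ) =
        ((Real.sqrt (bCoeff a γ / bCoeff a (FreeMonoid.ofList l * γ)) : ℝ) : ℂ) •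
          fockBasis (FreeMonoid.ofList l * γ) := by
    intro l
    induction l with
    | nil =>
      intro γ
      have h1 : (FreeMonoid.ofList ([] : List (Fin n))) = 1 := rfl
      rw [h1]
      simp only [one_mul]
      rw [div_self (bCoeff_pos ha γ).ne']
      simp [opWord]
    | cons i t ih =>
      intro γ
      have h1 : opWord W (FreeMonoid.ofList (i :: t)) =
          W i * opWord W (FreeMonoid.ofList t) := by
        simp only [opWord, FreeMonoid.toList_ofList, List.map_cons, List.prod_cons]
      rw [h1]
      have h2 : (W i * opWord W (FreeMonoid.ofList t)) (fockBasis γ) =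
          W i (opWord W (FreeMonoid.ofList t) (fockBasis γ)) := rfl
      rw [h2, ih γ, map_smul, hW i (FreeMonoid.ofList t * γ)]
      rw [smul_smul]
      have hassoc : FreeMonoid.ofList (i :: t) * γ =
          FreeMonoid.of i * (FreeMonoid.ofList t * γ) := by
        rw [FreeMonoid.ofList_cons, mul_assoc]
      rw [hassoc]
      congr 1
      rw [← Complex.ofReal_mul]
      congr 1
      rw [← Real.sqrt_mul (div_nonneg (bCoeff_pos ha γ).le (bCoeff_pos ha _).le)]
      congr 1
      rw [div_mul_div_comm]
      rw [mul_comm (bCoeff a γ) _]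
      rw [mul_div_mul_left _ _ (bCoeff_pos ha (FreeMonoid.ofList t * γ)).ne']
  have := main (FreeMonoid.toList β) γ
  simpa [FreeMonoid.ofList_toList] using this

end shift
noncomputable def Sop {n : ℕ} (W : Fin n → Fock n →L[ℂ] Fock n) (c : Word n → ℂ) (k : ℕ) :
    Fock n →L[ℂ] Fock n :=
  ∑' β : {γ : Word n // wordLen γ = k}, c β.1 • opWord W β.1

section shift
variable {a : Word n → ℝ} {W : Fin n → Fock n →L[ℂ] Fock n} {c : Word n → ℂ}

lemma Sop_basis_coord (ha : PosRegular a) (hW : IsWeightedShift a W) (k : ℕ) (γ δ : Word n) :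
    (Sop W c k (fockBasis γ)) δ =
      if wordLen δ = k + wordLen γ ∧ wdrop k δ = γ then
        c (wtake k δ) * ((Real.sqrt (bCoeff a γ / bCoeff a δ) : ℝ) : ℂ)
      else 0 := by
  haveI := finite_words_eq (n := n) k
  letI : Fintype {w : Word n // wordLen w = k} := Fintype.ofFinite _
  have hS : Sop W c k = ∑ β : {w : Word n // wordLen w = k}, c β.1 • opWord W β.1 :=
    tsum_fintype _
  rw [hS]
  have happly : (∑ β : {w : Word n // wordLen w = k}, c β.1 • opWord W β.1) (fockBasis γ) =
      ∑ β : {w : Word n // wordLen w = k}, c β.1 • (opWord W β.1 (fockBasis γ)) := by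
    rw [ContinuousLinearMap.sum_apply]
    apply Finset.sum_congr rfl
    intro β _
    rfl
  rw [happly]
  have hcoord : (∑ β : {w : Word n // wordLen w = k},
      c β.1 • (opWord W β.1 (fockBasis γ))) δ =
      ∑ β : {w : Word n // wordLen w = k}, (c β.1 • (opWord W β.1 (fockBasis γ)) : Fock n) δ := by
    rw [← coordCLM_apply, map_sum]
    apply Finset.sum_congr rfl
    intro β _
    rw [coordCLM_apply]
  rw [hcoord]
  have hterm : ∀ β : {w : Word n // wordLen w = k},
      (c β.1 • (opWord W β.1 (fockBasis γ)) : Fock n) δ =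
        if β.1 * γ = δ then c β.1 * ((Real.sqrt (bCoeff a γ / bCoeff a δ) : ℝ) : ℂ) else 0 := by
    intro β
    rw [opWord_basis ha hW]
    have : ((c β.1 • (((Real.sqrt (bCoeff a γ / bCoeff a (β.1 * γ)) : ℝ) : ℂ) •
        fockBasis (β.1 * γ))) : Fock n) δ =
        c β.1 * (((Real.sqrt (bCoeff a γ / bCoeff a (β.1 * γ)) : ℝ) : ℂ) *
          (fockBasis (β.1 * γ) : Fock n) δ) := by
      rw [lp.coeFn_smul, lp.coeFn_smul]
      rfl
    rw [this, fockBasis_apply]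
    by_cases h : β.1 * γ = δ
    · rw [if_pos h.symm, if_pos h, h]
      ring
    · rw [if_neg (fun hh => h hh.symm), if_neg h]
      ring
  rw [Finset.sum_congr rfl (fun β _ => hterm β)]
  by_cases hP : wordLen δ = k + wordLen γ ∧ wdrop k δ = γ
  · rw [if_pos hP]
    have hkle : k ≤ wordLen δ := by omega
    set β₀ : {w : Word n // wordLen w = k} := ⟨wtake k δ, wordLen_wtake hkle⟩ with hβ₀
    rw [Finset.sum_eq_single β₀]
    · rw [if_pos]
      rw [hβ₀]
      conv_lhs => rw [← hP.2]
      exact wtake_mul_wdrop k δ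
    · intro β _ hβ
      rw [if_neg]
      intro h
      apply hβ
      apply Subtype.ext
      have : wtake k (β.1 * γ) = β.1 := wtake_prod β.2 γ
      rw [h] at this
      rw [hβ₀, ← this]
    · intro h
      exact absurd (Finset.mem_univ β₀) h
  · rw [if_neg hP]
    apply Finset.sum_eq_zero
    intro β _
    rw [if_neg]
    intro h
    apply hP
    constructor
    · rw [← h, wordLen_mul, β.2]
    · rw [← h, wdrop_prod β.2]

lemma Sop_apply_coord (ha : PosRegular a) (hW : IsWeightedShift a W) (k : ℕ)
    (x : Fock n) (δ : Word n) :
    (Sop W c k x) δ =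
      if k ≤ wordLen δ then
        c (wtake k δ) * ((Real.sqrt (bCoeff a (wdrop k δ) / bCoeff a δ) : ℝ) : ℂ) *
          x (wdrop k δ)
      else 0 := by
  have hsum : HasSum (fun γ : Word n => lp.single 2 γ (x γ)) x :=
    lp.hasSum_single (by norm_num) x
  have hsum2 : HasSum (fun γ : Word n => coordCLM δ (Sop W c k (lp.single 2 γ (x γ))))
      (coordCLM δ (Sop W c k x)) :=
    ((coordCLM δ).comp (Sop W c k)).hasSum hsum
  have hterm : ∀ γ : Word n, coordCLM δ (Sop W c k (lp.single 2 γ (x γ))) =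
      x γ * (if wordLen δ = k + wordLen γ ∧ wdrop k δ = γ then
        c (wtake k δ) * ((Real.sqrt (bCoeff a γ / bCoeff a δ) : ℝ) : ℂ) else 0) := by
    intro γ
    rw [single_eq_smul_basis, map_smul, map_smul, coordCLM_apply, Sop_basis_coord ha hW]
    rfl
  simp only [hterm] at hsum2
  set γ₀ := wdrop k δ with hγ₀
  have hvanish : ∀ γ : Word n, γ ≠ γ₀ →
      (x γ * (if wordLen δ = k + wordLen γ ∧ wdrop k δ = γ then
        c (wtake k δ) * ((Real.sqrt (bCoeff a γ / bCoeff a δ) : ℝ) : ℂ) else 0)) = 0 := by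
    intro γ hγ
    rw [if_neg, mul_zero]
    intro h
    exact hγ h.2.symm
  have h0 : HasSum (fun γ : Word n =>
      x γ * (if wordLen δ = k + wordLen γ ∧ wdrop k δ = γ then
        c (wtake k δ) * ((Real.sqrt (bCoeff a γ / bCoeff a δ) : ℝ) : ℂ) else 0))
      (x γ₀ * (if wordLen δ = k + wordLen γ₀ ∧ wdrop k δ = γ₀ then
        c (wtake k δ) * ((Real.sqrt (bCoeff a γ₀ / bCoeff a δ) : ℝ) : ℂ) else 0)) :=
    hasSum_single γ₀ hvanish
  have heq := hsum2.unique h0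
  rw [coordCLM_apply] at heq
  rw [heq]
  by_cases hk : k ≤ wordLen δ
  · rw [if_pos hk, if_pos]
    · ring
    · refine ⟨?_, rfl⟩
      rw [hγ₀, wordLen_wdrop]
      omega
  · rw [if_neg hk, if_neg]
    · ring
    · intro h
      rw [hγ₀, wordLen_wdrop] at h
      omega

end shift
/-! norms on Fock space -/

lemma fock_norm_sq (f : Fock n) : ‖f‖ ^ 2 = ∑' δ : Word n, ‖f δ‖ ^ 2 := by
  have h := lp.norm_rpow_eq_tsum (p := 2) (E := fun _ : Word n => ℂ) (by norm_num) f
  have h2 : ((2 : ℝ≥0∞)).toReal = (2 : ℝ) := by norm_num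
  rw [h2] at h
  have hl : ‖f‖ ^ (2 : ℝ) = ‖f‖ ^ (2 : ℕ) := by
    rw [← Real.rpow_natCast ‖f‖ 2]; norm_num
  rw [hl] at h
  rw [h]
  refine tsum_congr fun δ => ?_
  rw [← Real.rpow_natCast ‖f δ‖ 2]; norm_num

lemma fock_summable (f : Fock n) : Summable (fun δ : Word n => ‖f δ‖ ^ 2) := by
  have h := (lp.memℓp f).summable (p := 2) (by norm_num)
  have h2 : ((2 : ℝ≥0∞)).toReal = (2 : ℝ) := by norm_num
  rw [h2] at h
  apply h.congr
  intro δ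
  rw [← Real.rpow_natCast ‖f δ‖ 2]; norm_num

section shift
variable {a : Word n → ℝ} {W : Fin n → Fock n →L[ℂ] Fock n} {c : Word n → ℂ}

lemma Sop_apply_norm_sq (ha : PosRegular a) (hW : IsWeightedShift a W) (k : ℕ)
    (x : Fock n) (δ : Word n) :
    ‖(Sop W c k x) δ‖ ^ 2 =
      if k ≤ wordLen δ then
        ‖c (wtake k δ)‖ ^ 2 * (bCoeff a (wdrop k δ) / bCoeff a δ) * ‖x (wdrop k δ)‖ ^ 2
      else 0 := by
  rw [Sop_apply_coord ha hW]
  by_cases h : k ≤ wordLen δ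
  · rw [if_pos h, if_pos h]
    rw [norm_mul, norm_mul, mul_pow, mul_pow]
    congr 1
    congr 1
    rw [Complex.norm_real, Real.norm_eq_abs,
      abs_of_nonneg (Real.sqrt_nonneg _), Real.sq_sqrt
      (div_nonneg (bCoeff_pos ha _).le (bCoeff_pos ha _).le)]
  · rw [if_neg h, if_neg h]
    simp

set_option maxHeartbeats 1000000 in
lemma Sop_norm_sq_apply_le (ha : PosRegular a) (hW : IsWeightedShift a W) (k : ℕ)
    (x : Fock n) :
    ‖Sop W c k x‖ ^ 2 ≤
      (∑' β : {γ : Word n // wordLen γ = k}, ‖c β.1‖ ^ 2 / bCoeff a β.1) * ‖x‖ ^ 2 := by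
  haveI := finite_words_eq (n := n) k
  set M := ∑' β : {γ : Word n // wordLen γ = k}, ‖c β.1‖ ^ 2 / bCoeff a β.1 with hM
  have hMsum : Summable (fun β : {γ : Word n // wordLen γ = k} =>
      ‖c β.1‖ ^ 2 / bCoeff a β.1) := Summable.of_finite
  set g : Word n → ℝ := fun δ => ‖(Sop W c k x) δ‖ ^ 2 with hg
  set h : Word n → ℝ := fun δ =>
    if k ≤ wordLen δ then
      (‖c (wtake k δ)‖ ^ 2 / bCoeff a (wtake k δ)) * ‖x (wdrop k δ)‖ ^ 2
    else 0 with hh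
  have hgsum : Summable g := fock_summable _
  have hgh : ∀ δ, g δ ≤ h δ := by
    intro δ
    rw [hg, hh]
    simp only
    rw [Sop_apply_norm_sq ha hW]
    by_cases hk : k ≤ wordLen δ
    · rw [if_pos hk, if_pos hk]
      have hb : bCoeff a (wdrop k δ) / bCoeff a δ ≤ 1 / bCoeff a (wtake k δ) := by
        rw [div_le_div_iff₀ (bCoeff_pos ha _) (bCoeff_pos ha _)]
        calc bCoeff a (wdrop k δ) * bCoeff a (wtake k δ)
            = bCoeff a (wtake k δ) * bCoeff a (wdrop k δ) := mul_comm _ _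
          _ ≤ bCoeff a (wtake k δ * wdrop k δ) := bCoeff_mul_le ha _ _
          _ = bCoeff a δ := by rw [wtake_mul_wdrop]
          _ = 1 * bCoeff a δ := (one_mul _).symm
      calc ‖c (wtake k δ)‖ ^ 2 * (bCoeff a (wdrop k δ) / bCoeff a δ) * ‖x (wdrop k δ)‖ ^ 2
          ≤ ‖c (wtake k δ)‖ ^ 2 * (1 / bCoeff a (wtake k δ)) * ‖x (wdrop k δ)‖ ^ 2 := by
            apply mul_le_mul_of_nonneg_right _ (by positivity)
            exact mul_le_mul_of_nonneg_left hb (by positivity)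
        _ = ‖c (wtake k δ)‖ ^ 2 / bCoeff a (wtake k δ) * ‖x (wdrop k δ)‖ ^ 2 := by
            rw [mul_one_div]
    · rw [if_neg hk, if_neg hk]
  set ι : {γ : Word n // wordLen γ = k} × Word n → Word n := fun p => p.1.1 * p.2 with hι
  have hinj : Function.Injective ι := by
    rintro ⟨⟨β, hβ⟩, γ⟩ ⟨⟨β', hβ'⟩, γ'⟩ hpq
    simp only [hι] at hpq
    have h1 : β = β' := by
      have := wtake_prod hβ γ
      rw [hpq, wtake_prod hβ' γ'] at this
      exact this.symm
    subst h1
    have h2 : γ = γ' := by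
      have := wdrop_prod hβ γ
      rw [hpq, wdrop_prod hβ γ'] at this
      exact this.symm
    simp [h2]
  have hcomp : ∀ p : {γ : Word n // wordLen γ = k} × Word n,
      h (ι p) = (‖c p.1.1‖ ^ 2 / bCoeff a p.1.1) * ‖x p.2‖ ^ 2 := by
    rintro ⟨⟨β, hβ⟩, γ⟩
    simp only [hh, hι]
    rw [if_pos (by rw [wordLen_mul, hβ]; omega)]
    rw [wtake_prod hβ, wdrop_prod hβ]
  have hrange : ∀ δ ∉ Set.range ι, h δ = 0 := by
    intro δ hδ
    rw [hh]
    simp only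
    rw [if_neg]
    intro hk
    exact hδ ⟨(⟨wtake k δ, wordLen_wtake hk⟩, wdrop k δ), wtake_mul_wdrop k δ⟩
  have hpairs : Summable (fun p : {γ : Word n // wordLen γ = k} × Word n =>
      (‖c p.1.1‖ ^ 2 / bCoeff a p.1.1) * ‖x p.2‖ ^ 2) :=
    Summable.mul_of_nonneg hMsum (fock_summable x)
      (fun β => div_nonneg (by positivity) (bCoeff_pos ha _).le) (fun γ => by positivity)
  have hcompsum : Summable (h ∘ ι) := by
    apply hpairs.congr
    intro p
    exact (hcomp p).symm
  have hhsum : Summable h := (hinj.summable_iff hrange).mp hcompsum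
  have hsupp : Function.support h ⊆ Set.range ι := by
    intro δ hδ
    by_contra hr
    exact hδ (hrange δ hr)
  have htsum : ∑' δ, h δ = M * ‖x‖ ^ 2 := by
    rw [← hinj.tsum_eq hsupp]
    calc ∑' p, h (ι p)
        = ∑' p : {γ : Word n // wordLen γ = k} × Word n,
            (‖c p.1.1‖ ^ 2 / bCoeff a p.1.1) * ‖x p.2‖ ^ 2 := tsum_congr hcomp
      _ = ∑' β : {γ : Word n // wordLen γ = k}, ∑' γ : Word n,
            (‖c β.1‖ ^ 2 / bCoeff a β.1) * ‖x γ‖ ^ 2 :=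
          hpairs.tsum_prod' (fun β => hpairs.prod_factor β)
      _ = ∑' β : {γ : Word n // wordLen γ = k},
            (‖c β.1‖ ^ 2 / bCoeff a β.1) * ∑' γ : Word n, ‖x γ‖ ^ 2 := by
          refine tsum_congr fun β => ?_
          exact tsum_mul_left
      _ = M * ‖x‖ ^ 2 := by
          rw [tsum_mul_right, fock_norm_sq]
  calc ‖Sop W c k x‖ ^ 2 = ∑' δ, g δ := fock_norm_sq _
    _ ≤ ∑' δ, h δ := Summable.tsum_le_tsum hgh hgsum hhsum
    _ = M * ‖x‖ ^ 2 := htsum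

lemma tsum_M_nonneg (ha : PosRegular a) (k : ℕ) :
    0 ≤ ∑' β : {γ : Word n // wordLen γ = k}, ‖c β.1‖ ^ 2 / bCoeff a β.1 :=
  tsum_nonneg fun β => div_nonneg (by positivity) (bCoeff_pos ha _).le

lemma Sop_norm_le (ha : PosRegular a) (hW : IsWeightedShift a W) (k : ℕ) :
    ‖Sop W c k‖ ≤
      Real.sqrt (∑' β : {γ : Word n // wordLen γ = k}, ‖c β.1‖ ^ 2 / bCoeff a β.1) := by
  apply ContinuousLinearMap.opNorm_le_bound _ (Real.sqrt_nonneg _)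
  intro x
  have h := Sop_norm_sq_apply_le (c := c) ha hW k x
  have h1 : ‖Sop W c k x‖ = Real.sqrt (‖Sop W c k x‖ ^ 2) :=
    (Real.sqrt_sq (norm_nonneg _)).symm
  rw [h1]
  calc Real.sqrt (‖Sop W c k x‖ ^ 2)
      ≤ Real.sqrt ((∑' β : {γ : Word n // wordLen γ = k}, ‖c β.1‖ ^ 2 / bCoeff a β.1) *
          ‖x‖ ^ 2) := Real.sqrt_le_sqrt h
    _ = Real.sqrt (∑' β : {γ : Word n // wordLen γ = k}, ‖c β.1‖ ^ 2 / bCoeff a β.1) *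
          Real.sqrt (‖x‖ ^ 2) := Real.sqrt_mul (tsum_M_nonneg ha k) _
    _ = Real.sqrt (∑' β : {γ : Word n // wordLen γ = k}, ‖c β.1‖ ^ 2 / bCoeff a β.1) * ‖x‖ := by
          rw [Real.sqrt_sq (norm_nonneg _)]

lemma M_le_Sop_norm_sq (ha : PosRegular a) (hW : IsWeightedShift a W) (k : ℕ) :
    (∑' β : {γ : Word n // wordLen γ = k}, ‖c β.1‖ ^ 2 / bCoeff a β.1) ≤ ‖Sop W c k‖ ^ 2 := by
  have hx1 : ‖fockBasis (1 : Word n)‖ = 1 := by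
    have := lp.norm_single (p := 2) (E := fun _ : Word n => ℂ) (by norm_num)
      1 (1 : ℂ)
    simpa [fockBasis] using this
  have key : ∀ δ : Word n, ‖(Sop W c k (fockBasis 1)) δ‖ ^ 2 =
      (fun δ : Word n => if wordLen δ = k then ‖c δ‖ ^ 2 / bCoeff a δ else 0) δ := by
    intro δ
    simp only
    rw [Sop_apply_coord ha hW, fockBasis_apply]
    by_cases hk : k ≤ wordLen δ
    · rw [if_pos hk]
      by_cases hep : wordLen δ = k
      · rw [if_pos hep]
        rw [if_pos (wdrop_eq_one (le_of_eq hep)), wdrop_eq_one (le_of_eq hep),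
          wtake_eq_self (le_of_eq hep), bCoeff_one, mul_one]
        rw [norm_mul, mul_pow, Complex.norm_real, Real.norm_eq_abs,
          abs_of_nonneg (Real.sqrt_nonneg _), Real.sq_sqrt
          (div_nonneg (by norm_num) (bCoeff_pos ha _).le)]
        field_simp
      · rw [if_neg hep, if_neg (fun hd => hep (by
          have := wordLen_wdrop k δ
          rw [hd] at this
          have h0 : wordLen (1 : Word n) = 0 := wordLen_eq_zero.mpr rfl
          omega)), mul_zero]
        simp
    · rw [if_neg hk, if_neg (fun h => hk (le_of_eq h.symm))]
      simp
  have hnormsq : ‖Sop W c k (fockBasis 1)‖ ^ 2 =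
      ∑' β : {γ : Word n // wordLen γ = k}, ‖c β.1‖ ^ 2 / bCoeff a β.1 := by
    rw [fock_norm_sq, tsum_congr key]
    rw [← tsum_subtype_eq_of_support_subset (s := {δ : Word n | wordLen δ = k})
      (by
        intro δ hδ
        simp only [Function.mem_support] at hδ
        by_contra hmem
        exact hδ (if_neg hmem))]
    refine tsum_congr fun β => ?_
    rw [if_pos (show wordLen (β : Word n) = k from β.2)]
  calc (∑' β : {γ : Word n // wordLen γ = k}, ‖c β.1‖ ^ 2 / bCoeff a β.1)
      = ‖Sop W c k (fockBasis 1)‖ ^ 2 := hnormsq.symm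
    _ ≤ (‖Sop W c k‖ * ‖fockBasis (1 : Word n)‖) ^ 2 := by
        apply pow_le_pow_left₀ (norm_nonneg _)
        exact (Sop W c k).le_opNorm _
    _ = ‖Sop W c k‖ ^ 2 := by rw [hx1, mul_one]

end shift
end Aux

set_option synthInstance.maxHeartbeats 1000000 in
/-- a formal power series `g = Σ_α c_α Z_α` is a free holomorphic function
on `D_f` (i.e. `g(rW_1, …, rW_n) = Σ_k r^k Σ_{|α|=k} c_α W_α` converges in operator norm
for every `0 ≤ r < 1`) if and only if
`limsup_{k→∞} (Σ_{|β|=k} |c_β|²/b_β)^{1/(2k)} ≤ 1`, the latter phrased as: for every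
`ρ > 1`, eventually `Σ_{|β|=k} |c_β|²/b_β ≤ ρ^{2k}`. -/
theorem free_holomorphic_iff {n : ℕ} (a : Word n → ℝ) (hreg : PosRegular a)
    (W : Fin n → Fock n →L[ℂ] Fock n) (hW : IsWeightedShift a W)
    (c : Word n → ℂ) :
    (∀ r : ℝ, 0 ≤ r → r < 1 →
      Summable (fun k : ℕ =>
        (r : ℂ) ^ k • ∑' β : {γ : Word n // wordLen γ = k}, c β.1 • opWord W β.1)) ↔
    (∀ ρ : ℝ, 1 < ρ → ∀ᶠ k in atTop,
      (∑' β : {γ : Word n // wordLen γ = k}, ‖c β.1‖ ^ 2 / bCoeff a β.1) ≤ ρ ^ (2 * k)) := by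
  have hSop : ∀ (r : ℝ), (fun k : ℕ =>
      (r : ℂ) ^ k • ∑' β : {γ : Word n // wordLen γ = k}, c β.1 • opWord W β.1) =
      fun k : ℕ => (r : ℂ) ^ k • Sop W c k := fun r => rfl
  constructor
  · intro hsum ρ hρ
    have hρ0 : (0 : ℝ) < ρ := lt_trans one_pos hρ
    have hr0 : (0 : ℝ) ≤ ρ⁻¹ := inv_nonneg.mpr hρ0.le
    have hr1 : ρ⁻¹ < 1 := inv_lt_one_of_one_lt₀ hρ
    have h := (hsum ρ⁻¹ hr0 hr1).tendsto_atTop_zero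
    rw [hSop ρ⁻¹] at h
    have hnorm : Tendsto (fun k : ℕ => ‖((ρ⁻¹ : ℝ) : ℂ) ^ k • Sop W c k‖) atTop (𝓝 0) := by
      have h2 := h.norm
      rw [norm_zero] at h2
      exact h2
    have hev : ∀ᶠ k in atTop, ‖((ρ⁻¹ : ℝ) : ℂ) ^ k • Sop W c k‖ < 1 :=
      hnorm.eventually_lt_const one_pos
    filter_upwards [hev] with k hk
    have hnormeq : ‖((ρ⁻¹ : ℝ) : ℂ) ^ k • Sop W c k‖ = (ρ⁻¹) ^ k * ‖Sop W c k‖ := by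
      rw [norm_smul (((ρ⁻¹ : ℝ) : ℂ) ^ k) (Sop W c k), norm_pow, Complex.norm_real,
        Real.norm_eq_abs, abs_of_nonneg hr0]
    rw [hnormeq] at hk
    have hρk : (0 : ℝ) < ρ ^ k := pow_pos hρ0 k
    have hSk : ‖Sop W c k‖ ≤ ρ ^ k := by
      rw [inv_pow] at hk
      by_contra hcon
      push_neg at hcon
      have h1 : (ρ ^ k)⁻¹ * (ρ ^ k) < (ρ ^ k)⁻¹ * ‖Sop W c k‖ :=
        mul_lt_mul_of_pos_left hcon (inv_pos.mpr hρk)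
      rw [inv_mul_cancel₀ hρk.ne'] at h1
      linarith
    calc (∑' β : {γ : Word n // wordLen γ = k}, ‖c β.1‖ ^ 2 / bCoeff a β.1)
        ≤ ‖Sop W c k‖ ^ 2 := M_le_Sop_norm_sq hreg hW k
      _ ≤ (ρ ^ k) ^ 2 := pow_le_pow_left₀ (norm_nonneg _) hSk 2
      _ = ρ ^ (2 * k) := by rw [← pow_mul, mul_comm]
  · intro hcond r hr0 hr1
    rw [hSop r]
    rcases eq_or_lt_of_le hr0 with h0 | h0
    · apply summable_of_ne_finset_zero (s := {0})
      intro k hk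
      have hk0 : k ≠ 0 := by simpa using hk
      rw [← h0]
      simp [zero_pow hk0]
    · set ρ := Real.sqrt r⁻¹ with hρdef
      have hρ : 1 < ρ := by
        rw [hρdef]
        rw [show (1 : ℝ) = Real.sqrt 1 by rw [Real.sqrt_one]]
        apply Real.sqrt_lt_sqrt (by norm_num)
        exact (one_lt_inv₀ h0).mpr hr1
      have hrρ : r * ρ = Real.sqrt r := by
        rw [hρdef]
        nth_rewrite 1 [show r = Real.sqrt (r ^ 2) from (Real.sqrt_sq h0.le).symm]
        rw [← Real.sqrt_mul (sq_nonneg r)]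
        congr 1
        field_simp
      have hrρ1 : r * ρ < 1 := by
        rw [hrρ]
        rw [show (1 : ℝ) = Real.sqrt 1 by rw [Real.sqrt_one]]
        exact Real.sqrt_lt_sqrt hr0 hr1
      have hrρ0 : 0 ≤ r * ρ := by
        rw [hrρ]; exact Real.sqrt_nonneg r
      apply Summable.of_norm_bounded_eventually_nat (g := fun k => (r * ρ) ^ k)
        (summable_geometric_of_lt_one hrρ0 hrρ1)
      filter_upwards [hcond ρ hρ] with k hk
      have h1 : ‖(r : ℂ) ^ k • Sop W c k‖ = r ^ k * ‖Sop W c k‖ := by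
        rw [norm_smul ((r : ℂ) ^ k) (Sop W c k), norm_pow, Complex.norm_real,
          Real.norm_eq_abs, abs_of_nonneg hr0]
      rw [h1]
      have h2 : ‖Sop W c k‖ ≤ ρ ^ k := by
        refine le_trans (Sop_norm_le hreg hW k) ?_
        refine le_trans (Real.sqrt_le_sqrt hk) ?_
        rw [mul_comm, pow_mul, Real.sqrt_sq (pow_nonneg (le_trans zero_le_one hρ.le) k)]
      calc r ^ k * ‖Sop W c k‖ ≤ r ^ k * ρ ^ k :=
            mul_le_mul_of_nonneg_left h2 (pow_nonneg hr0 k)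
        _ = (r * ρ) ^ k := (mul_pow r ρ k).symm

end NCDomain
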